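/- Let 0 < a < t be reals and let k ≥ 0 and p ≥ 1 be integers. Then $\int_a^t \frac{(\ln\frac{τ}{a})^{k+p+1}}{(\ln\frac{t}{a})^{k+p}}\, dτ \le \frac{(2t-a)(\ln\frac{t}{a})^{2}}{k+p+2}$. -/

import Mathlib

/-!
On `[a, t]` we have `1 ≤ t / τ`, so the integrand is at most `t · log (τ / a) ^ (n + 1) / τ`
(with `n = k + p`), which has the exact primitive `t · log (τ / a) ^ (n + 2) / (n + 2)`.
This bounds the integral by `t · log (t / a) ^ 2 / (n + 2)`, and `t ≤ 2t - a`.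
-/

open intervalIntegral

lemma pos_of_mem_uIcc {a b x : ℝ} (ha : 0 < a) (hb : 0 < b) (hx : x ∈ Set.uIcc a b) : 0 < x :=
  (lt_min ha hb).trans_le hx.1

theorem hasDerivAt_log_div_pow_succ_div {a x : ℝ} (ha : 0 < a) (hx : 0 < x) (m : ℕ) :
    HasDerivAt (fun τ => Real.log (τ / a) ^ (m + 1) / (m + 1)) (Real.log (x / a) ^ m / x) x := by
  have hlog : HasDerivAt (fun τ => Real.log (τ / a)) x⁻¹ x := by
    convert ((hasDerivAt_id' x).div_const a).log (div_pos hx ha).ne' using 1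
    field_simp
  refine ((hlog.fun_pow (m + 1)).div_const _).congr_deriv ?_
  rw [add_tsub_cancel_right]
  push_cast
  field_simp

theorem integral_log_div_pow_div_self {a b : ℝ} (ha : 0 < a) (hb : 0 < b) (m : ℕ) :
    ∫ τ in a..b, Real.log (τ / a) ^ m / τ = Real.log (b / a) ^ (m + 1) / (m + 1) := by
  have hpos := fun x (hx : x ∈ Set.uIcc a b) => pos_of_mem_uIcc ha hb hx
  rw [integral_eq_sub_of_hasDerivAt fun x hx => hasDerivAt_log_div_pow_succ_div ha (hpos x hx) m]
  · simp
  · refine (continuousOn_of_forall_continuousAt fun x hx => ?_).intervalIntegrable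
    have := hpos x hx
    fun_prop (disch := positivity)

theorem integral_log_div_pow_le {a t : ℝ} (ha : 0 < a) (hat : a ≤ t) (m : ℕ) :
    ∫ τ in a..t, Real.log (τ / a) ^ m ≤ t * Real.log (t / a) ^ (m + 1) / (m + 1) := by
  have ht : 0 < t := ha.trans_le hat
  have hpos := fun x (hx : x ∈ Set.uIcc a t) => pos_of_mem_uIcc ha ht hx
  have hle : ∀ x ∈ Set.Icc a t, Real.log (x / a) ^ m ≤ t * (Real.log (x / a) ^ m / x) := by
    intro x hx
    have hlog : 0 ≤ Real.log (x / a) := Real.log_nonneg ((one_le_div ha).2 hx.1)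
    rw [mul_div_left_comm]
    exact le_mul_of_one_le_right (pow_nonneg hlog m) ((one_le_div (ha.trans_le hx.1)).2 hx.2)
  calc ∫ τ in a..t, Real.log (τ / a) ^ m
      ≤ ∫ τ in a..t, t * (Real.log (τ / a) ^ m / τ) := by
        refine integral_mono_on hat ?_ ?_ hle
        all_goals
          refine (continuousOn_of_forall_continuousAt fun x hx => ?_).intervalIntegrable
          have := hpos x hx
          fun_prop (disch := positivity)
    _ = t * Real.log (t / a) ^ (m + 1) / (m + 1) := by
        rw [integral_const_mul, integral_log_div_pow_div_self ha ht, mul_div_assoc]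

theorem integral_log_pow_le'_general
    (a t : ℝ) (ha : 0 < a) (hat : a < t) (k p : ℕ) :
    (∫ τ in a..t, (Real.log (τ / a)) ^ (k + p + 1) / (Real.log (t / a)) ^ (k + p)) ≤
      (2 * t - a) * (Real.log (t / a)) ^ 2 / ((k : ℝ) + p + 2) := by
  set L := Real.log (t / a)
  have hL : 0 < L := Real.log_pos ((one_lt_div ha).2 hat)
  calc (∫ τ in a..t, Real.log (τ / a) ^ (k + p + 1) / L ^ (k + p))
      ≤ t * L ^ (k + p + 1 + 1) / ((k + p + 1 : ℕ) + 1) / L ^ (k + p) := by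
        rw [integral_div]
        gcongr
        exact integral_log_div_pow_le ha hat.le _
    _ = t * L ^ 2 / ((k : ℝ) + p + 2) := by
        push_cast
        field_simp
        ring
    _ ≤ (2 * t - a) * L ^ 2 / ((k : ℝ) + p + 2) := by
        gcongr
        linarith

theorem integral_log_pow_le'
    (a t : ℝ) (ha : 0 < a) (hat : a < t) (k p : ℕ) (hp : 1 ≤ p) :
    (∫ τ in a..t, (Real.log (τ / a)) ^ (k + p + 1) / (Real.log (t / a)) ^ (k + p)) ≤
      (2 * t - a) * (Real.log (t / a)) ^ 2 / ((k : ℝ) + p + 2) :=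
  integral_log_pow_le'_general a t ha hat k p
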